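/- Let k be a field and μ ∈ k a nonzero scalar. The quotient of the free associative k-algebra on z₁, z₂ by the two-sided ideal generated by z₂z₁ − μ z₁z₂, z₂², and z₁² + z₁z₂ is finite-dimensional as a k-vector space. -/
import Mathlib


open FreeAlgebra

/-- The relations `z₂z₁ = μ z₁z₂`, `z₂² = 0`, `z₁² + z₁z₂ = 0` on the free algebra
`k⟨z₁,z₂⟩` (with `z₁ = ι k 0`, `z₂ = ι k 1`). -/
def jordanQuadricRel (k : Type*) [Field k] (μ : k) :
    FreeAlgebra k (Fin 2) → FreeAlgebra k (Fin 2) → Prop := fun a b =>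
  (a = ι k 1 * ι k 0 ∧ b = μ • (ι k 0 * ι k 1)) ∨
  (a = ι k 1 ^ 2 ∧ b = 0) ∨
  (a = ι k 0 ^ 2 + ι k 0 * ι k 1 ∧ b = 0)

/-- For a field `k` and `μ ∈ k^×`, the quotient
`k⟨z₁,z₂⟩/⟨z₂z₁ − μz₁z₂, z₂², z₁² + z₁z₂⟩` is finite-dimensional over `k`. -/
theorem quantum_plane_mod_jordan_quadrics_finite_dimensional
    (k : Type*) [Field k] (μ : k) (hμ : μ ≠ 0) :
    FiniteDimensional k (RingQuot (jordanQuadricRel k μ)) := by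

  set R := jordanQuadricRel k μ with hR
  set f := RingQuot.mkAlgHom k R with hf
  set x := f (ι k 0) with hx
  set y := f (ι k 1) with hy
  have hr2 : R (ι k 1 * ι k 0) (μ • (ι k 0 * ι k 1)) := Or.inl ⟨rfl, rfl⟩
  have hr1 : R (ι k 1 ^ 2) 0 := Or.inr (Or.inl ⟨rfl, rfl⟩)
  have hr3 : R (ι k 0 ^ 2 + ι k 0 * ι k 1) 0 := Or.inr (Or.inr ⟨rfl, rfl⟩)
  have h2 : y * x = μ • (x * y) := by
    simpa [map_mul, map_smul] using RingQuot.mkAlgHom_rel k hr2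
  have h1 : y * y = 0 := by
    simpa [pow_two, map_mul] using RingQuot.mkAlgHom_rel k hr1
  have h3' : x * x + x * y = 0 := by
    simpa [pow_two, map_mul, map_add] using RingQuot.mkAlgHom_rel k hr3
  have h3 : x * x = -(x * y) := eq_neg_of_add_eq_zero_left h3'
  have h5 : (x * y) * y = 0 := by rw [mul_assoc, h1, mul_zero]
  have h4 : x * (x * y) = 0 := by
    have : (x * x + x * y) * y = 0 := by rw [h3', zero_mul]
    rw [add_mul, mul_assoc, h5, add_zero] at this
    exact this
  have h6 : y * (x * y) = 0 := by
    rw [← mul_assoc, h2, smul_mul_assoc, h5, smul_zero]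
  have h7 : (x * y) * x = 0 := by
    rw [mul_assoc, h2, mul_smul_comm, h4, smul_zero]
  have h8 : (x * y) * (x * y) = 0 := by rw [← mul_assoc, h7, zero_mul]
  set S : Submodule k (RingQuot R) :=
    Submodule.span k {1, x, y, x * y} with hS
  have m1 : (1 : RingQuot R) ∈ S := Submodule.subset_span (by simp)
  have mx : x ∈ S := Submodule.subset_span (by simp)
  have my : y ∈ S := Submodule.subset_span (by simp)
  have mxy : x * y ∈ S := Submodule.subset_span (by simp)
  have hmul : ∀ a ∈ S, ∀ b ∈ S, a * b ∈ S := by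
    intro a ha
    induction ha using Submodule.span_induction with
    | mem u hu =>
      intro b hb
      induction hb using Submodule.span_induction with
      | mem v hv =>
        simp only [Set.mem_insert_iff, Set.mem_singleton_iff] at hu hv
        rcases hu with rfl | rfl | rfl | rfl <;>
          rcases hv with rfl | rfl | rfl | rfl <;>
          try simp only [one_mul, mul_one, h1, h2, h3, h4, h5, h6, h7, h8]
        all_goals
          first
            | exact m1 | exact mx | exact my | exact mxy
            | exact S.zero_mem
            | exact S.neg_mem mxy
            | exact S.smul_mem μ mxy
      | zero => simp
      | add b c _ _ hb hc => rw [mul_add]; exact S.add_mem hb hc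
      | smul r b _ hb => rw [mul_smul_comm]; exact S.smul_mem r hb
    | zero => intro b _; simp
    | add a c _ _ ha hc => intro b hb; rw [add_mul]; exact S.add_mem (ha b hb) (hc b hb)
    | smul r a _ ha => intro b hb; rw [smul_mul_assoc]; exact S.smul_mem r (ha b hb)
  have htop : (⊤ : Submodule k (RingQuot R)) ≤ S := by
    rintro q -
    obtain ⟨a, rfl⟩ := RingQuot.mkAlgHom_surjective k R q
    induction a using FreeAlgebra.induction with
    | grade0 r =>
      rw [AlgHom.commutes, Algebra.algebraMap_eq_smul_one]
      exact S.smul_mem r m1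
    | grade1 i =>
      fin_cases i
      · exact mx
      · exact my
    | mul a b ha hb => rw [map_mul]; exact hmul _ ha _ hb
    | add a b ha hb => rw [map_add]; exact S.add_mem ha hb
  have hSt : S = ⊤ := top_le_iff.mp htop
  have hfg : (⊤ : Submodule k (RingQuot R)).FG :=
    hSt ▸ (hS ▸ Submodule.fg_span (Set.toFinite _))
  exact Module.finite_def.mpr hfg
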